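/- arXiv:1807.00118 — 2 statements merged into one kernel-verified Lean document; each statement's English description precedes it below -/
import Mathlib

section
/- Let 𝔤 be a Lie algebra over ℂ with an invariant symmetric bilinear form ⟨·,·⟩. Then the bilinear map ω on the loop algebra 𝔤 ⊗ ℂ((t)) defined by ω(x ⊗ P, y ⊗ Q) = Res_{t=0}((dP) Q) ⟨x,y⟩ is a 2-cocycle; that is, ω is skew-symmetric and satisfies ω([a,b], c) + ω([b,c], a) + ω([c,a], b) = 0 for all a, b, c in the loop algebra. Consequently, the bracket [x⊗P + zC, y⊗Q + z'C] = [x,y] ⊗ PQ + ω(x⊗P, y⊗Q) C defines a Lie algebra structure on (𝔤 ⊗ ℂ((t))) ⊕ ℂC. -/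
/-!
The residue pairing `(P, Q) ↦ Res ((dP) Q)` is skew because `d` is a derivation and the residue
of a derivative vanishes: `Res ((dP) Q) + Res ((dQ) P) = Res (d (PQ)) = 0`. For the same reason
the cyclic sum `Σ Res (d(PQ) R)` equals `2 Res (d(PQR)) = 0`. Symmetry and invariance of `⟨·,·⟩`
make `⟨[x,y],z⟩` invariant under cyclic permutations, so on pure tensors the cocycle sum is
`⟨[x,y],z⟩` times that cyclic residue sum, and bilinearity extends it to the whole loop algebra.
The Jacobi identity of the central extension is the Jacobi identity of the loop algebra in the
first component and the cocycle identity in the second.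
-/

open TensorProduct

namespace LaurentSeries

open HahnSeries

variable {R : Type*} [CommRing R]

theorem coeff_derivative (f : LaurentSeries R) (n : ℤ) :
    (derivative R f).coeff n = (n + 1) * f.coeff (n + 1) := by
  simp

theorem coeff_single_one_mul_derivative (f : LaurentSeries R) (n : ℤ) :
    (single 1 1 * derivative R f).coeff n = n * f.coeff n := by
  obtain ⟨m, rfl⟩ : ∃ m, n = m + 1 := ⟨n - 1, by ring⟩
  rw [coeff_single_mul_add, one_mul, coeff_derivative]
  push_cast
  ring

-- `t d/dt` multiplies the `n`-th coefficient by `n`, so its Leibniz rule needs no reindexing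
theorem single_one_mul_derivative_mul (f g : LaurentSeries R) :
    single 1 1 * derivative R (f * g) =
      single 1 1 * derivative R f * g + f * (single 1 1 * derivative R g) := by
  have hsupp : ∀ h : LaurentSeries R, (single 1 1 * derivative R h).support ⊆ h.support :=
    fun h n hn hzero => hn (by rw [coeff_single_one_mul_derivative, hzero, mul_zero])
  ext n
  rw [coeff_single_one_mul_derivative, coeff_add, coeff_mul, Finset.mul_sum,
    coeff_mul_left' f.isPWO_support (hsupp f), coeff_mul_right' g.isPWO_support (hsupp g),
    ← Finset.sum_add_distrib]
  refine Finset.sum_congr rfl fun ij hij => ?_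
  rw [← (Finset.mem_antidiagonal.mp hij).2.2, coeff_single_one_mul_derivative,
    coeff_single_one_mul_derivative]
  push_cast
  ring

theorem derivative_mul (f g : LaurentSeries R) :
    derivative R (f * g) = derivative R f * g + f * derivative R g := by
  have hunit : single (-1 : ℤ) (1 : R) * single 1 1 = 1 := by
    rw [single_mul_single]; simp
  have h : single 1 1 * derivative R (f * g) =
      single 1 1 * (derivative R f * g + f * derivative R g) := by
    rw [single_one_mul_derivative_mul]
    ring
  simpa only [← mul_assoc, hunit, one_mul] using congrArg (single (-1 : ℤ) (1 : R) * ·) h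

theorem coeff_neg_one_derivative (f : LaurentSeries R) : (derivative R f).coeff (-1) = 0 := by
  simp

theorem coeff_neg_one_derivative_mul_swap (f g : LaurentSeries R) :
    (derivative R f * g).coeff (-1) = -(derivative R g * f).coeff (-1) := by
  have h := coeff_neg_one_derivative (f * g)
  rw [derivative_mul, coeff_add, mul_comm f] at h
  exact eq_neg_of_add_eq_zero_left h

theorem coeff_neg_one_derivative_mul_cyclic (f g h : LaurentSeries R) :
    (derivative R (f * g) * h).coeff (-1) + (derivative R (g * h) * f).coeff (-1) +
      (derivative R (h * f) * g).coeff (-1) = 0 := by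
  have hsum : derivative R (f * g) * h + derivative R (g * h) * f + derivative R (h * f) * g =
      derivative R (f * (g * h)) + derivative R (f * (g * h)) := by
    simp only [derivative_mul]
    ring
  rw [← coeff_add, ← coeff_add, hsum, coeff_add, coeff_neg_one_derivative, add_zero]

end LaurentSeries

section TensorExtension

variable {K M N V : Type*} [CommRing K] [AddCommGroup M] [Module K M] [AddCommGroup N]
  [Module K N] [AddCommGroup V] [Module K V]

theorem TensorProduct.bilin_skew_of_tmul (β : M ⊗[K] N →ₗ[K] M ⊗[K] N →ₗ[K] V)
    (h : ∀ x y P Q, β (x ⊗ₜ P) (y ⊗ₜ Q) = -β (y ⊗ₜ Q) (x ⊗ₜ P)) (a b : M ⊗[K] N) :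
    β a b = -β b a := by
  induction a using TensorProduct.induction_on with
  | zero => simp
  | add a₁ a₂ h₁ h₂ => rw [map_add, LinearMap.add_apply, h₁, h₂, map_add, neg_add]
  | tmul x P =>
    induction b using TensorProduct.induction_on with
    | zero => simp
    | add b₁ b₂ h₁ h₂ => rw [map_add, h₁, h₂, map_add, LinearMap.add_apply, neg_add]
    | tmul y Q => exact h x y P Q

theorem TensorProduct.bilin_leibniz_of_tmul (f : M ⊗[K] N →ₗ[K] M ⊗[K] N →ₗ[K] M ⊗[K] N)
    (h : ∀ x y z P Q R, f (x ⊗ₜ P) (f (y ⊗ₜ Q) (z ⊗ₜ R)) =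
      f (f (x ⊗ₜ P) (y ⊗ₜ Q)) (z ⊗ₜ R) + f (y ⊗ₜ Q) (f (x ⊗ₜ P) (z ⊗ₜ R)))
    (a b c : M ⊗[K] N) : f a (f b c) = f (f a b) c + f b (f a c) := by
  induction a using TensorProduct.induction_on with
  | zero => simp
  | add a₁ a₂ h₁ h₂ => simp only [map_add, LinearMap.add_apply, h₁, h₂]; abel
  | tmul x P =>
    induction b using TensorProduct.induction_on with
    | zero => simp
    | add b₁ b₂ h₁ h₂ => simp only [map_add, LinearMap.add_apply, h₁, h₂]; abel
    | tmul y Q =>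
      induction c using TensorProduct.induction_on with
      | zero => simp
      | add c₁ c₂ h₁ h₂ => simp only [map_add, h₁, h₂]; abel
      | tmul z R => exact h x y z P Q R

theorem TensorProduct.bilin_cocycle_of_tmul (f : M ⊗[K] N →ₗ[K] M ⊗[K] N →ₗ[K] M ⊗[K] N)
    (ω : M ⊗[K] N →ₗ[K] M ⊗[K] N →ₗ[K] V)
    (h : ∀ x y z P Q R, ω (f (x ⊗ₜ P) (y ⊗ₜ Q)) (z ⊗ₜ R) + ω (f (y ⊗ₜ Q) (z ⊗ₜ R)) (x ⊗ₜ P) +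
      ω (f (z ⊗ₜ R) (x ⊗ₜ P)) (y ⊗ₜ Q) = 0)
    (a b c : M ⊗[K] N) : ω (f a b) c + ω (f b c) a + ω (f c a) b = 0 := by
  induction a using TensorProduct.induction_on with
  | zero => simp
  | add a₁ a₂ h₁ h₂ =>
    simp only [map_add, LinearMap.add_apply]; linear_combination (norm := module) h₁ + h₂
  | tmul x P =>
    induction b using TensorProduct.induction_on with
    | zero => simp
    | add b₁ b₂ h₁ h₂ =>
      simp only [map_add, LinearMap.add_apply]; linear_combination (norm := module) h₁ + h₂
    | tmul y Q =>
      induction c using TensorProduct.induction_on with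
      | zero => simp
      | add c₁ c₂ h₁ h₂ =>
        simp only [map_add, LinearMap.add_apply]; linear_combination (norm := module) h₁ + h₂
      | tmul z R => exact h x y z P Q R

end TensorExtension

section CentralExtension

variable {K T V : Type*} [CommRing K] [AddCommGroup T] [Module K T] [AddCommGroup V] [Module K V]

def centralExtensionBracket (f : T →ₗ[K] T →ₗ[K] T) (ω : T →ₗ[K] T →ₗ[K] V) (a b : T × V) :
    T × V :=
  (f a.1 b.1, ω a.1 b.1)

variable {f : T →ₗ[K] T →ₗ[K] T} {ω : T →ₗ[K] T →ₗ[K] V}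

theorem centralExtensionBracket_skew (hf : ∀ a b, f a b = -f b a)
    (hω : ∀ a b, ω a b = -ω b a) (a b : T × V) :
    centralExtensionBracket f ω a b = -centralExtensionBracket f ω b a :=
  Prod.ext (hf a.1 b.1) (hω a.1 b.1)

theorem centralExtensionBracket_leibniz (hf : ∀ a b, f a b = -f b a)
    (hf_leibniz : ∀ a b c, f a (f b c) = f (f a b) c + f b (f a c))
    (hω : ∀ a b, ω a b = -ω b a)
    (hω_cocycle : ∀ a b c, ω (f a b) c + ω (f b c) a + ω (f c a) b = 0) (a b c : T × V) :
    centralExtensionBracket f ω a (centralExtensionBracket f ω b c) =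
      centralExtensionBracket f ω (centralExtensionBracket f ω a b) c +
        centralExtensionBracket f ω b (centralExtensionBracket f ω a c) := by
  refine Prod.ext (hf_leibniz a.1 b.1 c.1) ?_
  have hcocycle := hω_cocycle a.1 b.1 c.1
  rw [hω (f b.1 c.1), hf c.1 a.1, map_neg, LinearMap.neg_apply, hω (f a.1 c.1)] at hcocycle
  simp only [centralExtensionBracket, Prod.snd_add]
  linear_combination (norm := module) -hcocycle

end CentralExtension

section InvariantForm

variable {K L : Type*} [CommRing K] [LieRing L] [LieAlgebra K L] {B : L →ₗ[K] L →ₗ[K] K}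

theorem invariantForm_lie_cyclic (hB_symm : ∀ x y, B x y = B y x)
    (hB_inv : ∀ x y z, B ⁅x, y⁆ z = B x ⁅y, z⁆) (x y z : L) :
    B ⁅y, z⁆ x = B ⁅x, y⁆ z := by
  rw [hB_symm, hB_inv]

end InvariantForm

/-- The bilinear map `ω(x⊗P, y⊗Q) = Res_{t=0}((dP)Q)⟨x,y⟩` on the loop algebra
`𝔤 ⊗ ℂ((t))` (with pointwise bracket `[x⊗P, y⊗Q] = [x,y] ⊗ PQ`) is a 2-cocycle:
it is skew-symmetric and satisfies the cocycle identity; consequently the bracket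
`[(a, z), (b, z')] = ([a,b], ω a b)` on `(𝔤 ⊗ ℂ((t))) ⊕ ℂC` is alternating and
satisfies the Jacobi (Leibniz) identity, i.e. defines a Lie algebra structure. -/
theorem stmt_3 (g : Type) [LieRing g] [LieAlgebra ℂ g]
    (B : g →ₗ[ℂ] g →ₗ[ℂ] ℂ)
    (hBsymm : ∀ x y : g, B x y = B y x)
    (hBinv : ∀ x y z : g, B ⁅x, y⁆ z = B x ⁅y, z⁆)
    (D : LaurentSeries ℂ →ₗ[ℂ] LaurentSeries ℂ)
    (hD : ∀ (P : LaurentSeries ℂ) (n : ℤ), (D P).coeff n = ((n : ℂ) + 1) * P.coeff (n + 1))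
    (br0 : (g ⊗[ℂ] LaurentSeries ℂ) →ₗ[ℂ] (g ⊗[ℂ] LaurentSeries ℂ) →ₗ[ℂ]
      (g ⊗[ℂ] LaurentSeries ℂ))
    (hbr0 : ∀ (x y : g) (P Q : LaurentSeries ℂ),
      br0 (x ⊗ₜ[ℂ] P) (y ⊗ₜ[ℂ] Q) = ⁅x, y⁆ ⊗ₜ[ℂ] (P * Q))
    (ω : (g ⊗[ℂ] LaurentSeries ℂ) →ₗ[ℂ] (g ⊗[ℂ] LaurentSeries ℂ) →ₗ[ℂ] ℂ)
    (hω : ∀ (x y : g) (P Q : LaurentSeries ℂ),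
      ω (x ⊗ₜ[ℂ] P) (y ⊗ₜ[ℂ] Q) = (D P * Q).coeff (-1) * B x y) :
    (∀ a b : g ⊗[ℂ] LaurentSeries ℂ, ω a b = - ω b a) ∧
    (∀ a b c : g ⊗[ℂ] LaurentSeries ℂ, ω (br0 a b) c + ω (br0 b c) a + ω (br0 c a) b = 0) ∧
    (let br : ((g ⊗[ℂ] LaurentSeries ℂ) × ℂ) → ((g ⊗[ℂ] LaurentSeries ℂ) × ℂ) →
        ((g ⊗[ℂ] LaurentSeries ℂ) × ℂ) := fun a b => (br0 a.1 b.1, ω a.1 b.1);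
      (∀ a b, br a b = - br b a) ∧
      (∀ a b c, br a (br b c) = br (br a b) c + br b (br a c))) := by
  obtain rfl : D = LaurentSeries.derivative ℂ :=
    LinearMap.ext fun P => by ext n; rw [hD, LaurentSeries.coeff_derivative]
  have hbr0_skew := bilin_skew_of_tmul br0 fun x y P Q => by
    rw [hbr0, hbr0, ← lie_skew, neg_tmul, mul_comm]
  have hbr0_leibniz := bilin_leibniz_of_tmul br0 fun x y z P Q R => by
    simp only [hbr0]
    rw [leibniz_lie, add_tmul, mul_assoc, mul_left_comm Q P]
  have hω_skew := bilin_skew_of_tmul ω fun x y P Q => by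
    rw [hω, hω, hBsymm, LaurentSeries.coeff_neg_one_derivative_mul_swap, neg_mul]
  have hω_cocycle := bilin_cocycle_of_tmul br0 ω fun x y z P Q R => by
    rw [hbr0, hbr0, hbr0, hω, hω, hω, invariantForm_lie_cyclic hBsymm hBinv x y z,
      invariantForm_lie_cyclic hBsymm hBinv y z x, invariantForm_lie_cyclic hBsymm hBinv x y z]
    linear_combination B ⁅x, y⁆ z * LaurentSeries.coeff_neg_one_derivative_mul_cyclic P Q R
  exact ⟨hω_skew, hω_cocycle, centralExtensionBracket_skew hbr0_skew hω_skew,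
    centralExtensionBracket_leibniz hbr0_skew hbr0_leibniz hω_skew hω_cocycle⟩
end

section
/- Every finite group of ℂ-algebra automorphisms of the formal power series ring ℂ[[t]] is cyclic. More precisely, the map sending an automorphism σ to its action on the cotangent space 𝔪/𝔪² ≅ ℂ (i.e., to the linear coefficient of σ(t)) is an injective group homomorphism from the finite group into ℂ^×, and every finite subgroup of ℂ^× is cyclic. -/
/-!
An automorphism `σ` of `k⟦X⟧` preserves the maximal ideal `(X)`, so `σ X = c X + O(X²)`, and
`σ ↦ c` is multiplicative. If `c = 1` but `σ X ≠ X`, then `σ X = X + a X^m + O(X^{m+1})` with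
`m ≥ 2` and `a ≠ 0`; iterating, `σ^n X = X + n a X^m + O(X^{m+1})`, which in characteristic zero
is never `X` for `n > 0`. Since an automorphism fixing `X` fixes every polynomial and preserves
congruences modulo `X^n`, it is the identity. Hence `σ ↦ c` is injective on a finite group of
automorphisms, which therefore embeds in `kˣ` and is cyclic.
-/

namespace PowerSeries

section CommRing

variable {R : Type*} [CommRing R]

@[simp]
theorem algHom_apply_C {F : Type*} [FunLike F R⟦X⟧ R⟦X⟧] [AlgHomClass F R R⟦X⟧ R⟦X⟧] (φ : F)
    (a : R) : φ (C a) = C a := by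
  simpa [algebraMap_apply] using AlgHomClass.commutes φ a

theorem algHom_eq_id_of_apply_X {φ : R⟦X⟧ →ₐ[R] R⟦X⟧} (hφ : φ X = X) :
    φ = AlgHom.id R R⟦X⟧ := by
  have hpoly (p : Polynomial R) : φ p = p := by
    have : φ.comp (Polynomial.coeToPowerSeries.algHom R) = Polynomial.coeToPowerSeries.algHom R :=
      Polynomial.algHom_ext (by simp [hφ])
    simpa using DFunLike.congr_fun this p
  ext f j
  obtain ⟨g, hg⟩ : X ^ (j + 1) ∣ f - (trunc (j + 1) f : R⟦X⟧) :=
    X_pow_dvd_iff.mpr fun m hm => by simp [coeff_coe_trunc_of_lt hm]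
  have hφg : φ f - (trunc (j + 1) f : R⟦X⟧) = X ^ (j + 1) * φ g := by
    simpa [hφ, hpoly] using congrArg φ hg
  have : φ f - f = X ^ (j + 1) * (φ g - g) := by linear_combination hφg - hg
  simpa [coeff_X_pow_mul', sub_eq_zero] using congrArg (coeff j) this

theorem constantCoeff_algHom_apply {φ : R⟦X⟧ →ₐ[R] R⟦X⟧} (hφ : constantCoeff (φ X) = 0)
    (f : R⟦X⟧) : constantCoeff (φ f) = constantCoeff f := by
  conv_lhs => rw [eq_X_mul_shift_add_const f]
  simp [hφ]

theorem coeff_one_algHom_apply {φ : R⟦X⟧ →ₐ[R] R⟦X⟧} (hφ : constantCoeff (φ X) = 0)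
    (f : R⟦X⟧) : coeff 1 (φ f) = coeff 1 f * coeff 1 (φ X) := by
  conv_lhs => rw [eq_X_mul_shift_add_const f]
  simp [coeff_mul, Finset.Nat.sum_antidiagonal_succ, coeff_zero_eq_constantCoeff, hφ,
    constantCoeff_algHom_apply hφ, mul_comm]

theorem X_pow_succ_dvd_pow_sub_X_pow {f : R⟦X⟧} (hf : X ^ 2 ∣ f - X) (m : ℕ) :
    X ^ (m + 1) ∣ f ^ m - X ^ m := by
  obtain ⟨w, hw⟩ := hf
  have hfac : f ^ m - X ^ m = X ^ m * ((1 + X * w) ^ m - 1 ^ m) := by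
    rw [show f = X * (1 + X * w) by linear_combination hw, mul_pow, one_pow, mul_sub, mul_one]
  rw [hfac, pow_succ]
  exact mul_dvd_mul_left _ (dvd_trans ⟨w, by ring⟩ (sub_dvd_pow_sub_pow _ _ m))

theorem X_pow_succ_dvd_pow_apply_X_sub (σ : R⟦X⟧ ≃ₐ[R] R⟦X⟧) {m : ℕ} (hm : 2 ≤ m) {a : R}
    (hσ : X ^ (m + 1) ∣ σ X - (X + C a * X ^ m)) (n : ℕ) :
    X ^ (m + 1) ∣ (σ ^ n) X - (X + C (n * a) * X ^ m) := by
  have hX2 : X ^ 2 ∣ σ X - X := by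
    have h := dvd_add (dvd_trans (pow_dvd_pow X (by omega)) hσ)
      (dvd_mul_of_dvd_right (pow_dvd_pow X hm) (C a))
    rwa [sub_add_eq_sub_sub, sub_add_cancel] at h
  have hX : X ∣ σ X := by
    simpa using dvd_add (dvd_trans (dvd_pow_self X two_ne_zero) hX2) (dvd_refl X)
  induction n with
  | zero => simp
  | succ n ih =>
    obtain ⟨s, hs⟩ := ih
    have hexp : (σ ^ (n + 1)) X - (X + C ((n + 1 : ℕ) * a) * X ^ m) =
        (σ X - (X + C a * X ^ m)) + C (n * a) * ((σ X) ^ m - X ^ m)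
          + (σ X) ^ (m + 1) * σ s := by
      rw [pow_succ', AlgEquiv.mul_apply, eq_add_of_sub_eq hs]
      simp only [map_add, map_mul, map_pow, algHom_apply_C, Nat.cast_succ, add_mul, one_mul]
      ring
    rw [hexp]
    exact dvd_add (dvd_add hσ (dvd_mul_of_dvd_right (X_pow_succ_dvd_pow_sub_X_pow hX2 m) _))
      (dvd_mul_of_dvd_left (pow_dvd_pow_of_dvd hX _) _)

end CommRing

section Field

variable {k : Type*} [Field k]

theorem constantCoeff_algEquiv_apply_X (σ : k⟦X⟧ ≃ₐ[k] k⟦X⟧) : constantCoeff (σ X) = 0 := by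
  by_contra h
  have hX : IsUnit (X : k⟦X⟧) := by
    rw [← isUnit_map_iff σ, isUnit_iff_constantCoeff]
    exact isUnit_iff_ne_zero.mpr h
  simpa using isUnit_iff_constantCoeff.mp hX

/-- The scalar by which `σ` acts on `𝔪/𝔪² = k ∙ X`. -/
noncomputable def linearCoeffHom : (k⟦X⟧ ≃ₐ[k] k⟦X⟧) →* k where
  toFun σ := coeff 1 (σ X)
  map_one' := by simp
  map_mul' σ τ := by
    rw [AlgEquiv.mul_apply, mul_comm]
    exact coeff_one_algHom_apply (φ := σ.toAlgHom) (constantCoeff_algEquiv_apply_X σ) (τ X)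

theorem linearCoeffHom_apply (σ : k⟦X⟧ ≃ₐ[k] k⟦X⟧) : linearCoeffHom σ = coeff 1 (σ X) := rfl

theorem eq_one_of_isOfFinOrder_of_linearCoeffHom_eq_one [CharZero k] {σ : k⟦X⟧ ≃ₐ[k] k⟦X⟧}
    (hσ : IsOfFinOrder σ) (h1 : linearCoeffHom σ = 1) : σ = 1 := by
  obtain ⟨n, hn, hσn⟩ := hσ.exists_pow_eq_one
  suffices hX : σ X = X from
    AlgEquiv.ext (DFunLike.congr_fun (algHom_eq_id_of_apply_X (φ := σ.toAlgHom) hX) ·)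
  by_contra hne
  set d := σ X - X
  have hd : d ≠ 0 := sub_ne_zero.mpr hne
  set m := d.order.toNat
  have hdm : coeff m d ≠ 0 := coeff_order hd
  have hm : 2 ≤ m := by
    have h0 : coeff 0 d = 0 := by simp [d, constantCoeff_algEquiv_apply_X]
    have h1 : coeff 1 d = 0 := by simpa [d, linearCoeffHom_apply, sub_eq_zero] using h1
    have : m ≠ 0 := fun h => hdm (h ▸ h0)
    have : m ≠ 1 := fun h => hdm (h ▸ h1)
    omega
  set a := coeff m d
  have hσX : X ^ (m + 1) ∣ σ X - (X + C a * X ^ m) := by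
    have : σ X - (X + C a * X ^ m) = X ^ m * (divXPowOrder d - C a) := by
      rw [mul_sub, X_pow_order_mul_divXPowOrder]; ring
    rw [this, pow_succ]
    exact mul_dvd_mul_left _ (X_dvd_iff.mpr (by simp [constantCoeff_divXPowOrder, a, m]))
  have := X_pow_dvd_iff.mp (X_pow_succ_dvd_pow_apply_X_sub σ hm hσX n) m m.lt_succ_self
  simp only [hσn, AlgEquiv.one_apply, sub_add_cancel_left, map_neg, coeff_C_mul_X_pow, if_pos,
    neg_eq_zero, mul_eq_zero, Nat.cast_eq_zero] at this
  exact this.elim hn.ne' hdm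

end Field

end PowerSeries

open PowerSeries

/-- Every finite group of `ℂ`-algebra automorphisms of `ℂ[[t]]` is cyclic: the map sending
an automorphism `σ` to the linear coefficient of `σ(t)` is a multiplicative, injective map
into `ℂ^×` (the coefficient is nonzero), and every finite subgroup of `ℂ^×` is cyclic. -/
theorem stmt_8 (G : Subgroup (PowerSeries ℂ ≃ₐ[ℂ] PowerSeries ℂ)) [Finite G] :
    (∀ σ τ : G,
      PowerSeries.coeff (R := ℂ) 1
          (((σ * τ : G) : PowerSeries ℂ ≃ₐ[ℂ] PowerSeries ℂ) PowerSeries.X)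
        = PowerSeries.coeff (R := ℂ) 1 ((σ : PowerSeries ℂ ≃ₐ[ℂ] PowerSeries ℂ) PowerSeries.X)
          * PowerSeries.coeff (R := ℂ) 1 ((τ : PowerSeries ℂ ≃ₐ[ℂ] PowerSeries ℂ) PowerSeries.X)) ∧
    (∀ σ : G,
      PowerSeries.coeff (R := ℂ) 1 ((σ : PowerSeries ℂ ≃ₐ[ℂ] PowerSeries ℂ) PowerSeries.X) ≠ 0) ∧
    Function.Injective (fun σ : G =>
      PowerSeries.coeff (R := ℂ) 1 ((σ : PowerSeries ℂ ≃ₐ[ℂ] PowerSeries ℂ) PowerSeries.X)) ∧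
    IsCyclic G ∧
    (∀ H : Subgroup ℂˣ, Finite H → IsCyclic H) := by
  let χ : G →* ℂ := linearCoeffHom.comp G.subtype
  have hχ : Function.Injective χ := (injective_iff_map_eq_one χ).mpr fun σ hσ =>
    Subtype.ext (eq_one_of_isOfFinOrder_of_linearCoeffHom_eq_one
      (G.subtype.isOfFinOrder (isOfFinOrder_of_finite σ)) hσ)
  exact ⟨map_mul χ, fun σ => ((Group.isUnit σ).map χ).ne_zero, hχ,
    isCyclic_of_injective_ringHom χ hχ, fun H _ => isCyclic_subgroup_units H⟩
end
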